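/- For the two-queue tandem system with communication blocking and intermediate buffer of capacity 0, the departure epoch from the second server admits the explicit representation: for every n ≥ 1, D_2(n) = max_{1 ≤ k ≤ n} { Σ_{j=1}^{k} τ_{0,j} + Σ_{j=k}^{n} (τ_{1,j} + τ_{2,j}) }. -/
import Mathlib


open Finset

/-- Arrival epochs: `arr τ n = arr τ (n-1) + τ 0 n`, `arr τ 0 = 0`. -/
noncomputable def arr (τ : ℕ → ℕ → ℝ) : ℕ → ℝ
  | 0 => 0
  | n + 1 => arr τ n + τ 0 (n + 1)

/-- Departure epochs `(D_1(n), D_2(n))` of the two-queue tandem system with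
communication blocking and intermediate buffer of capacity 0:
`D_1(n) = max (D_0(n)) (max (D_1(n-1)) (D_2(n-1))) + τ 1 n` and
`D_2(n) = max (D_1(n)) (D_2(n-1)) + τ 2 n`, with `D_1(0) = D_2(0) = 0`. -/
noncomputable def cb (τ : ℕ → ℕ → ℝ) : ℕ → ℝ × ℝ
  | 0 => (0, 0)
  | n + 1 =>
      let p := cb τ n
      let d1 := max (max (arr τ (n + 1)) p.1) p.2 + τ 1 (n + 1)
      (d1, max d1 p.2 + τ 2 (n + 1))

lemma arr_eq_sum (τ : ℕ → ℕ → ℝ) (n : ℕ) :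
    arr τ n = ∑ j ∈ Finset.Icc 1 n, τ 0 j := by
  induction n with
  | zero => simp [arr]
  | succ n ih =>
      rw [arr, ih, Finset.sum_Icc_succ_top (by omega : 1 ≤ n + 1)]

lemma cb_fst_le_snd (τ : ℕ → ℕ → ℝ) (hτ : ∀ i n, 0 ≤ τ i n) (n : ℕ) :
    (cb τ n).1 ≤ (cb τ n).2 := by
  cases n with
  | zero => simp [cb]
  | succ n =>
      have h : cb τ (n + 1) =
          (max (max (arr τ (n + 1)) (cb τ n).1) (cb τ n).2 + τ 1 (n + 1),
           max (max (max (arr τ (n + 1)) (cb τ n).1) (cb τ n).2 + τ 1 (n + 1)) (cb τ n).2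
             + τ 2 (n + 1)) := rfl
      rw [h]
      have := hτ 2 (n + 1)
      have := le_max_left (max (max (arr τ (n + 1)) (cb τ n).1) (cb τ n).2 + τ 1 (n + 1))
        (cb τ n).2
      simp only
      linarith

lemma cb_snd_succ (τ : ℕ → ℕ → ℝ) (hτ : ∀ i n, 0 ≤ τ i n) (n : ℕ) :
    (cb τ (n + 1)).2 = max (arr τ (n + 1)) (cb τ n).2 + (τ 1 (n + 1) + τ 2 (n + 1)) := by
  have h1 : max (max (arr τ (n + 1)) (cb τ n).1) (cb τ n).2
      = max (arr τ (n + 1)) (cb τ n).2 := by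
    have := cb_fst_le_snd τ hτ n
    rw [max_assoc, max_eq_right this]
  have h2 : max (max (arr τ (n + 1)) (cb τ n).2 + τ 1 (n + 1)) (cb τ n).2
      = max (arr τ (n + 1)) (cb τ n).2 + τ 1 (n + 1) := by
    apply max_eq_left
    have := hτ 1 (n + 1)
    have := le_max_right (arr τ (n + 1)) (cb τ n).2
    linarith
  show max (max (max (arr τ (n + 1)) (cb τ n).1) (cb τ n).2 + τ 1 (n + 1)) (cb τ n).2
      + τ 2 (n + 1) = _
  rw [h1, h2, add_assoc]

/-- For the two-queue tandem system with communication blocking and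
intermediate buffer of capacity 0, for every `n ≥ 1`,
`D_2(n) = max_{1 ≤ k ≤ n} { ∑_{j=1}^{k} τ 0 j + ∑_{j=k}^{n} (τ 1 j + τ 2 j) }`. -/
theorem cb_explicit (τ : ℕ → ℕ → ℝ) (hτ : ∀ i n, 0 ≤ τ i n)
    (n : ℕ) (hn : 1 ≤ n) :
    (cb τ n).2 =
      (Finset.Icc 1 n).sup' (Finset.nonempty_Icc.mpr hn)
        (fun k => (∑ j ∈ Finset.Icc 1 k, τ 0 j)
          + ∑ j ∈ Finset.Icc k n, (τ 1 j + τ 2 j)) := by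
  induction n, hn using Nat.le_induction with
  | base =>
      rw [show (1 : ℕ) = 0 + 1 from rfl, cb_snd_succ τ hτ 0]
      simp [cb, arr, max_eq_left (hτ 0 1)]
  | succ n hn ih =>
      rw [cb_snd_succ τ hτ n, ih]
      have hins : Finset.Icc 1 (n + 1) = insert (n + 1) (Finset.Icc 1 n) := by
        ext x
        simp [Nat.lt_succ_iff]
        omega
      have hne : (Finset.Icc 1 n).Nonempty := Finset.nonempty_Icc.mpr hn
      rw [Finset.sup'_congr _ hins (fun k _ => rfl), Finset.sup'_insert hne]
      rw [← max_add_add_right]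
      congr 1
      · rw [arr_eq_sum]
        have : Finset.Icc (n + 1) (n + 1) = {n + 1} := Finset.Icc_self _
        simp [this]
      · rw [Finset.sup'_add _ _ _ hne]
        apply Finset.sup'_congr _ rfl
        intro k hk
        have hkn : k ≤ n := (Finset.mem_Icc.mp hk).2
        rw [add_assoc]
        congr 1
        rw [Finset.sum_Icc_succ_top (by omega : k ≤ n + 1)]
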